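/- Let C_1, C_2, L > 0. For p_0 ∈ (0,1) and p ∈ [0,1), define L̃(p_0, p) = max{ 2C_1/p_0 , 2C_2/(p_0 + 2(1−p_0)p) , L/((1−p_0)(1−p)) }. (a) If C_2 > C_1, then L̃(p_0, p) ≥ C_1 + C_2 + L for all (p_0, p) ∈ (0,1) × [0,1), with equality at p_0 = 2C_1/(C_1 + C_2 + L) and p = (C_2 − C_1)/(C_2 − C_1 + L). (b) If C_2 ≤ C_1, then L̃(p_0, p) ≥ 2C_1 + L for all (p_0, p) ∈ (0,1) × [0,1), with equality at p_0 = 2C_1/(2C_1 + L) and p = 0. -/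

import Mathlib

/-
Write M = L̃(p₀, p). Each of the three terms is at most M, which gives the lower bounds
2C₁ ≤ M p₀, 2C₂ ≤ M (p₀ + 2(1−p₀)p) and L ≤ M (1−p₀)(1−p) on the three denominators.
These weighted denominators add up to a constant: p₀/2 + (p₀ + 2(1−p₀)p)/2 + (1−p₀)(1−p) = 1,
hence C₁ + C₂ + L ≤ M; dropping the middle term, p₀ + (1−p₀)(1−p) ≤ 1, hence 2C₁ + L ≤ M.
The comparison of C₁ and C₂ decides which bound is attained: at the optimum every term used
equals the bound, and for p ≥ 0 this point exists in the first case only when C₂ ≥ C₁.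
-/

noncomputable section

/-- The upper bound L̃(p_0, p) = max{2C_1/p_0, 2C_2/(p_0 + 2(1−p_0)p), L/((1−p_0)(1−p))}. -/
def Ltilde (C1 C2 L p0 p : ℝ) : ℝ :=
  max (max (2 * C1 / p0) (2 * C2 / (p0 + 2 * (1 - p0) * p))) (L / ((1 - p0) * (1 - p)))

namespace Ltilde

variable {C1 C2 L p0 p : ℝ}

lemma numerators_le_mul_denominators (hp0 : p0 ∈ Set.Ioo (0 : ℝ) 1) (hp : p ∈ Set.Ico (0 : ℝ) 1) :
    2 * C1 ≤ Ltilde C1 C2 L p0 p * p0 ∧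
      2 * C2 ≤ Ltilde C1 C2 L p0 p * (p0 + 2 * (1 - p0) * p) ∧
      L ≤ Ltilde C1 C2 L p0 p * ((1 - p0) * (1 - p)) := by
  obtain ⟨h0, h1⟩ := hp0
  obtain ⟨hq0, hq1⟩ := hp
  have hmid : 0 < p0 + 2 * (1 - p0) * p := by nlinarith
  have hlast : 0 < (1 - p0) * (1 - p) := mul_pos (by linarith) (by linarith)
  refine ⟨(div_le_iff₀ h0).1 ?_, (div_le_iff₀ hmid).1 ?_, (div_le_iff₀ hlast).1 ?_⟩ <;>
    simp only [Ltilde, le_max_iff, le_refl, true_or, or_true]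

lemma add_add_le (hp0 : p0 ∈ Set.Ioo (0 : ℝ) 1) (hp : p ∈ Set.Ico (0 : ℝ) 1) :
    C1 + C2 + L ≤ Ltilde C1 C2 L p0 p := by
  obtain ⟨h1, h2, h3⟩ := numerators_le_mul_denominators (C1 := C1) (C2 := C2) (L := L) hp0 hp
  linear_combination (h1 + h2 + 2 * h3) / 2

lemma two_mul_add_le (hL : 0 ≤ L) (hp0 : p0 ∈ Set.Ioo (0 : ℝ) 1) (hp : p ∈ Set.Ico (0 : ℝ) 1) :
    2 * C1 + L ≤ Ltilde C1 C2 L p0 p := by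
  obtain ⟨h1, -, h3⟩ := numerators_le_mul_denominators (C1 := C1) (C2 := C2) (L := L) hp0 hp
  have hM : 0 ≤ Ltilde C1 C2 L p0 p :=
    nonneg_of_mul_nonneg_left (hL.trans h3) (mul_pos (sub_pos.2 hp0.2) (sub_pos.2 hp.2))
  have hdrop : 0 ≤ Ltilde C1 C2 L p0 p * (p * (1 - p0)) :=
    mul_nonneg hM (mul_nonneg hp.1 (sub_pos.2 hp0.2).le)
  linear_combination h1 + h3 + hdrop

lemma eq_add_add (hC1 : 0 < C1) (hC12 : C1 ≤ C2) (hL : 0 < L) :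
    Ltilde C1 C2 L (2 * C1 / (C1 + C2 + L)) ((C2 - C1) / (C2 - C1 + L)) = C1 + C2 + L := by
  have hC2 : 0 < C2 := hC1.trans_le hC12
  have hM : C1 + C2 + L ≠ 0 := by positivity
  have hD : C2 - C1 + L ≠ 0 := (by linarith : 0 < C2 - C1 + L).ne'
  have hmid : 2 * C1 / (C1 + C2 + L) +
      2 * (1 - 2 * C1 / (C1 + C2 + L)) * ((C2 - C1) / (C2 - C1 + L)) = 2 * C2 / (C1 + C2 + L) := by
    field_simp
    ring
  have hlast : (1 - 2 * C1 / (C1 + C2 + L)) * (1 - (C2 - C1) / (C2 - C1 + L)) =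
      L / (C1 + C2 + L) := by
    field_simp
    ring
  rw [Ltilde, hmid, hlast, div_div_cancel₀ (by positivity), div_div_cancel₀ (by positivity),
    div_div_cancel₀ hL.ne', max_self, max_self]

lemma eq_two_mul_add (hC1 : 0 < C1) (hC21 : C2 ≤ C1) (hL : 0 < L) :
    Ltilde C1 C2 L (2 * C1 / (2 * C1 + L)) 0 = 2 * C1 + L := by
  have hM : 0 < 2 * C1 + L := by positivity
  have hlast : (1 - 2 * C1 / (2 * C1 + L)) * (1 - 0) = L / (2 * C1 + L) := by
    field_simp
    ring
  have hmid : 2 * C2 / (2 * C1 / (2 * C1 + L) + 2 * (1 - 2 * C1 / (2 * C1 + L)) * 0) ≤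
      2 * C1 + L := by
    rw [mul_zero, add_zero, div_div_eq_mul_div, div_le_iff₀ (by positivity)]
    nlinarith
  rw [Ltilde, hlast, div_div_cancel₀ (by positivity), div_div_cancel₀ hL.ne', max_eq_left hmid,
    max_self]

end Ltilde

theorem Ltilde_min_general (C1 C2 L : ℝ) (hC1 : 0 < C1) (hL : 0 < L) :
    (C2 > C1 →
      (∀ p0 p : ℝ, p0 ∈ Set.Ioo (0 : ℝ) 1 → p ∈ Set.Ico (0 : ℝ) 1 →
        C1 + C2 + L ≤ Ltilde C1 C2 L p0 p) ∧
      Ltilde C1 C2 L (2 * C1 / (C1 + C2 + L)) ((C2 - C1) / (C2 - C1 + L))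
        = C1 + C2 + L) ∧
    (C2 ≤ C1 →
      (∀ p0 p : ℝ, p0 ∈ Set.Ioo (0 : ℝ) 1 → p ∈ Set.Ico (0 : ℝ) 1 →
        2 * C1 + L ≤ Ltilde C1 C2 L p0 p) ∧
      Ltilde C1 C2 L (2 * C1 / (2 * C1 + L)) 0 = 2 * C1 + L) :=
  ⟨fun h12 => ⟨fun _ _ => Ltilde.add_add_le, Ltilde.eq_add_add hC1 h12.le hL⟩,
    fun h21 => ⟨fun _ _ => Ltilde.two_mul_add_le hL.le, Ltilde.eq_two_mul_add hC1 h21 hL⟩⟩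

/-- optimization of L̃ over (p_0, p) ∈ (0,1) × [0,1).
(a) If C_2 > C_1 the minimum value is C_1 + C_2 + L, attained at
p_0 = 2C_1/(C_1+C_2+L), p = (C_2−C_1)/(C_2−C_1+L).
(b) If C_2 ≤ C_1 the minimum value is 2C_1 + L, attained at p_0 = 2C_1/(2C_1+L), p = 0. -/
theorem Ltilde_min (C1 C2 L : ℝ) (hC1 : 0 < C1) (hC2 : 0 < C2) (hL : 0 < L) :
    (C2 > C1 →
      (∀ p0 p : ℝ, p0 ∈ Set.Ioo (0 : ℝ) 1 → p ∈ Set.Ico (0 : ℝ) 1 →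
        C1 + C2 + L ≤ Ltilde C1 C2 L p0 p) ∧
      Ltilde C1 C2 L (2 * C1 / (C1 + C2 + L)) ((C2 - C1) / (C2 - C1 + L))
        = C1 + C2 + L) ∧
    (C2 ≤ C1 →
      (∀ p0 p : ℝ, p0 ∈ Set.Ioo (0 : ℝ) 1 → p ∈ Set.Ico (0 : ℝ) 1 →
        2 * C1 + L ≤ Ltilde C1 C2 L p0 p) ∧
      Ltilde C1 C2 L (2 * C1 / (2 * C1 + L)) 0 = 2 * C1 + L) :=
  Ltilde_min_general C1 C2 L hC1 hL
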